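/- Let f ∈ C^∞(S²) and let R(f) be the reduction of the symbol of the Hamilton vector field of f (with respect to the area form) at the unit cosphere bundle, viewed as a map R : C^∞(S²) → C^∞(S²) via the identification of oriented great circles with unit normal vectors. If f is an even function (f(−x) = f(x) for all x ∈ S²), then R(f) = 0. -/

import Mathlib

open Real MeasureTheory

/-- Euclidean dot product on ℝ³. -/
def dot3 (v w : Fin 3 → ℝ) : ℝ := v 0 * w 0 + v 1 * w 1 + v 2 * w 2

/-- Cross product on ℝ³. -/
def cross3 (v w : Fin 3 → ℝ) : Fin 3 → ℝ :=
  ![v 1 * w 2 - v 2 * w 1, v 2 * w 0 - v 0 * w 2, v 0 * w 1 - v 1 * w 0]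

/-- The gradient of `f : ℝ³ → ℝ`. -/
noncomputable def grad3 (f : (Fin 3 → ℝ) → ℝ) (x : Fin 3 → ℝ) : Fin 3 → ℝ :=
  fun i => fderiv ℝ f x (Pi.single i 1)

lemma cross3_apply (v w : Fin 3 → ℝ) :
    cross3 v w 0 = v 1 * w 2 - v 2 * w 1 ∧
    cross3 v w 1 = v 2 * w 0 - v 0 * w 2 ∧
    cross3 v w 2 = v 0 * w 1 - v 1 * w 0 := by
  refine ⟨rfl, rfl, rfl⟩

lemma grad3_neg (f : (Fin 3 → ℝ) → ℝ) (hf : Differentiable ℝ f)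
    (heven : ∀ x, f (-x) = f x) (x : Fin 3 → ℝ) :
    grad3 f (-x) = - grad3 f x := by
  have hneg : HasFDerivAt (fun y : Fin 3 → ℝ => -y) (-(ContinuousLinearMap.id ℝ (Fin 3 → ℝ))) x :=
    (hasFDerivAt_id x).neg
  have hcomp : HasFDerivAt (fun y => f (-y))
      ((fderiv ℝ f (-x)).comp (-(ContinuousLinearMap.id ℝ (Fin 3 → ℝ)))) x :=
    (hf (-x)).hasFDerivAt.comp x hneg
  have hfun : (fun y => f (-y)) = f := funext heven
  rw [hfun] at hcomp
  have hd : fderiv ℝ f x = (fderiv ℝ f (-x)).comp (-(ContinuousLinearMap.id ℝ (Fin 3 → ℝ))) :=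
    hcomp.fderiv
  funext i
  simp only [grad3, Pi.neg_apply]
  have := congrArg (fun L : (Fin 3 → ℝ) →L[ℝ] ℝ => L (Pi.single i 1)) hd
  simp only [ContinuousLinearMap.comp_apply, ContinuousLinearMap.neg_apply,
    ContinuousLinearMap.id_apply, map_neg] at this
  linarith

/-- The transform `R` vanishes on even functions: for `f` even, the average over
any oriented great circle (with unit normal `n = e₁ × e₂`, parametrized by
`x(t) = cos t e₁ + sin t e₂`, with geodesic direction `ẋ = n × x`) of the symbol
`⟨ẋ, X_f(x)⟩` of the Hamilton vector field `X_f(x) = x × ∇f(x)` of `f` (with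
respect to the area form) is zero. -/
theorem stmt15 (f : (Fin 3 → ℝ) → ℝ) (hf : ContDiff ℝ (⊤ : ℕ∞) f)
    (heven : ∀ x, f (-x) = f x) :
    ∀ e₁ e₂ : Fin 3 → ℝ, dot3 e₁ e₁ = 1 → dot3 e₂ e₂ = 1 → dot3 e₁ e₂ = 0 →
      (∫ t in (0 : ℝ)..(2 * Real.pi),
        dot3 (cross3 (cross3 e₁ e₂) (Real.cos t • e₁ + Real.sin t • e₂))
          (cross3 (Real.cos t • e₁ + Real.sin t • e₂)
            (grad3 f (Real.cos t • e₁ + Real.sin t • e₂)))) = 0 := by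
  intro e₁ e₂ _ _ _
  set n := cross3 e₁ e₂ with hn
  set x : ℝ → Fin 3 → ℝ := fun t => Real.cos t • e₁ + Real.sin t • e₂ with hx
  set g : ℝ → ℝ := fun t => dot3 (cross3 n (x t)) (cross3 (x t) (grad3 f (x t))) with hg
  have hdiff : Differentiable ℝ f := hf.differentiable (by simp)
  -- continuity
  have hxc : Continuous x := by
    apply Continuous.add <;> exact (by fun_prop)
  have hGc : Continuous fun t => grad3 f (x t) := by
    apply continuous_pi
    intro i
    exact ((hf.continuous_fderiv (by simp)).comp hxc).clm_apply continuous_const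
  have hgc : Continuous g := by
    simp only [hg, dot3, cross3]
    simp only [Matrix.cons_val_zero, Matrix.cons_val_one, Matrix.head_cons,
      Matrix.cons_val_two, Matrix.tail_cons]
    fun_prop
  have hint : ∀ a b : ℝ, IntervalIntegrable g volume a b := fun a b =>
    hgc.intervalIntegrable a b
  -- antiperiodicity
  have hxpi : ∀ t, x (t + Real.pi) = -(x t) := by
    intro t
    simp only [hx, Real.cos_add_pi, Real.sin_add_pi]
    funext i
    simp
    ring
  have key : ∀ m y G : Fin 3 → ℝ,
      dot3 (cross3 m (-y)) (cross3 (-y) (-G)) = - dot3 (cross3 m y) (cross3 y G) := by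
    intro m y G
    simp only [dot3, cross3, Matrix.cons_val_zero, Matrix.cons_val_one, Matrix.head_cons,
      Matrix.cons_val_two, Matrix.tail_cons, Pi.neg_apply]
    ring
  have hodd : ∀ t, g (t + Real.pi) = - g t := by
    intro t
    have hG : grad3 f (-(x t)) = - grad3 f (x t) := grad3_neg f hdiff heven (x t)
    show dot3 (cross3 n (x (t + Real.pi))) (cross3 (x (t + Real.pi)) (grad3 f (x (t + Real.pi))))
      = - dot3 (cross3 n (x t)) (cross3 (x t) (grad3 f (x t)))
    rw [hxpi t, hG, key]
  have h2 : (∫ t in Real.pi..(2 * Real.pi), g t) = - ∫ t in (0:ℝ)..Real.pi, g t := by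
    have := intervalIntegral.integral_comp_add_right (a := (0:ℝ)) (b := Real.pi) g Real.pi
    rw [zero_add] at this
    have h2pi : Real.pi + Real.pi = 2 * Real.pi := by ring
    rw [h2pi] at this
    rw [← this]
    simp only [hodd]
    exact intervalIntegral.integral_neg
  have h1 : (∫ t in (0:ℝ)..Real.pi, g t) + ∫ t in Real.pi..(2 * Real.pi), g t
      = ∫ t in (0:ℝ)..(2 * Real.pi), g t :=
    intervalIntegral.integral_add_adjacent_intervals (hint 0 Real.pi) (hint Real.pi (2 * Real.pi))
  calc (∫ t in (0:ℝ)..(2 * Real.pi), g t)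
      = (∫ t in (0:ℝ)..Real.pi, g t) + ∫ t in Real.pi..(2 * Real.pi), g t := h1.symm
    _ = 0 := by rw [h2]; ring
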